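/- arXiv:2410.03260 — 3 statements merged into one kernel-verified Lean document; each statement's English description precedes it below -/
import Mathlib

section
/- For every pair of coprime integers p, q with q ≥ 1 and 0 ≤ p < q, there exist x ∈ [1,∞) and a lift F : ℝ → ℝ of the circle homeomorphism Ê_x (i.e., F is continuous, strictly increasing, satisfies F(s+1) = F(s)+1 for all s, and induces Ê_x on ℝ/ℤ) such that F^q(0) = p. In particular the orbit of the marked point 0 mod 1 (the image of the endpoint t = 1) under Ê_x is periodic of minimal period q, and the rotation number of Ê_x equals p/q mod 1. -/
open Set Filter

/-- The chart `φ(t) = 1 − 1/t`, a homeomorphism from `[1,∞)` onto `[0,1)`. -/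
noncomputable def phiMap (t : ℝ) : ℝ := 1 - 1 / t

/-- The inverse chart `φ⁻¹(s) = 1/(1−s)`. -/
noncomputable def phiInvMap (s : ℝ) : ℝ := 1 / (1 - s)

/-- The Möbius transformation `g(t) = (y−1)t/(t−1)`. -/
noncomputable def gMob (y t : ℝ) : ℝ := (y - 1) * t / (t - 1)

/-- The Möbius transformation `h_x(t) = x((1−y)t + y)/((1−y)t + x)`. -/
noncomputable def hMob (y x t : ℝ) : ℝ := x * ((1 - y) * t + y) / ((1 - y) * t + x)

/-- The interval exchange `E_x` of `[1,∞)`: for `x ∈ (1,∞)` it is `g ∘ h_x` on `[1, x/(x−1))`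
and `h_x` on `[x/(x−1), ∞)`; for `x = 1` (and `x = ∞`) it is `h_∞(t) = (1−y)t + y`. -/
noncomputable def EMap (y x t : ℝ) : ℝ :=
  if x = 1 then (1 - y) * t + y
  else if t < x / (x - 1) then gMob y (hMob y x t) else hMob y x t

/-- The self-map `Ê_x` of the circle `ℝ/ℤ` induced by `φ ∘ E_x ∘ φ⁻¹ : [0,1) → [0,1)`. -/
noncomputable def EHat (y x : ℝ) : UnitAddCircle → UnitAddCircle :=
  fun z => ((phiMap (EMap y x (phiInvMap ((AddCircle.equivIco 1 0 z : ℝ))))) : UnitAddCircle)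

/-- A lift of an orientation-preserving circle homeomorphism: a continuous strictly increasing
surjection `F : ℝ → ℝ` commuting with the unit translation. -/
def IsCircleLift (F : ℝ → ℝ) : Prop :=
  Continuous F ∧ StrictMono F ∧ Function.Surjective F ∧ ∀ s : ℝ, F (s + 1) = F s + 1

/-- `F` is a lift of the circle self-map `T`; in particular `T` is then a well-defined
orientation-preserving homeomorphism of `ℝ/ℤ`. -/
def IsLiftOf (F : ℝ → ℝ) (T : UnitAddCircle → UnitAddCircle) : Prop :=
  IsCircleLift F ∧ ∀ s : ℝ, ((F s : ℝ) : UnitAddCircle) = T ((s : ℝ) : UnitAddCircle)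

/-- `τ` is the translation number of the lift `F`. -/
def HasTransNum (F : ℝ → ℝ) (τ : ℝ) : Prop :=
  ∀ x : ℝ, Tendsto (fun n : ℕ => (F^[n] x - x) / (n : ℝ)) atTop (nhds τ)

/-! Put `c = φ(x) = 1 - 1/x ∈ [0,1]`, so that `c = 1` stands for `x = ∞`. In the coordinate
`u = φ(t) ∈ [0,1)` both pieces of `E_x` are Möbius maps, and `Ê_x` lifts to
`F_c(s) = ⌊s⌋ + min(L_c, R_c)(fract s)`: the minimum picks the right branch on either side of
the exchange point `u = 1 - c`, which makes `F_c` jointly continuous in `(c, s)`. Since `F_0`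
fixes `0` and `F_1 = F_0 + 1`, the intermediate value theorem gives `c` with `F_c^q(0) = p`, and
`c < 1` as `p < q`. The translation number is then `p/q`, and by coprimality no earlier iterate
of `0` is an integer. -/

theorem continuous_iterate_apply_of_continuous_uncurry {X Y : Type*} [TopologicalSpace X]
    [TopologicalSpace Y] {F : X → Y → Y} (hF : Continuous fun p : X × Y => F p.1 p.2) (n : ℕ)
    (y : Y) :
    Continuous fun c => (F c)^[n] y := by
  induction n with
  | zero => exact continuous_const
  | succ n ih =>
    simp only [Function.iterate_succ_apply']
    exact hF.comp (continuous_id.prodMk ih)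

namespace CircleDeg1Lift

theorem hasTransNum (f : CircleDeg1Lift) : HasTransNum f f.translationNumber := fun x => by
  simpa only [coe_pow] using f.tendsto_translationNumber x

theorem isCircleLift (f : CircleDeg1Lift) (hf : Continuous f) (hmono : StrictMono f) :
    IsCircleLift f :=
  ⟨hf, hmono, f.continuous_iff_surjective.mp hf, f.map_add_one⟩

theorem iterate_ne_add_int_of_isCoprime (f : CircleDeg1Lift) {x : ℝ} {p : ℤ} {q : ℕ}
    (hq : 0 < q) (hpq : IsCoprime p q) (hfq : f^[q] x = x + p) {k : ℕ} (hk : 0 < k)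
    (hkq : k < q) (m : ℤ) : f^[k] x ≠ x + m := by
  intro hfk
  have hτq := f.translationNumber_of_map_pow_eq_add_int (by rwa [coe_pow]) hq
  have hτk := f.translationNumber_of_map_pow_eq_add_int (by rwa [coe_pow]) hk
  have hpk : p * k = m * q := by
    rw [hτq, div_eq_div_iff (by positivity) (by positivity)] at hτk
    exact_mod_cast hτk
  have hqk : (q : ℤ) ∣ k := hpq.symm.dvd_of_dvd_mul_left ⟨m, by rw [hpk, mul_comm]⟩
  have := Int.le_of_dvd (by exact_mod_cast hk) hqk
  omega

end CircleDeg1Lift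

/-- With `x = (1 - c)⁻¹`, this is `φ ∘ g ∘ h_x ∘ φ⁻¹` (and `liftRight` is `1 + φ ∘ h_x ∘ φ⁻¹`). -/
noncomputable def liftLeft (y c u : ℝ) : ℝ := (c + (1 - y) * u) / (1 - y * u)

noncomputable def liftRight (y c u : ℝ) : ℝ := 2 - ((1 - y) * (1 - c) + (1 - u)) / (1 - y * u)

noncomputable def liftFrac (y c u : ℝ) : ℝ := min (liftLeft y c u) (liftRight y c u)

section Branches

variable {y c u : ℝ}

theorem one_sub_mul_pos (hy0 : 0 ≤ y) (hy1 : y < 1) (hu : u ≤ 1) : 0 < 1 - y * u := by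
  nlinarith

theorem liftRight_sub_liftLeft (hyu : 1 - y * u ≠ 0) :
    liftRight y c u - liftLeft y c u = y * (1 - c - u) / (1 - y * u) := by
  unfold liftLeft liftRight
  field_simp
  ring

theorem liftFrac_eq_liftLeft (hy : 0 ≤ y) (hyu : 0 < 1 - y * u) (hu : u ≤ 1 - c) :
    liftFrac y c u = liftLeft y c u := by
  refine min_eq_left (sub_nonneg.mp ?_)
  rw [liftRight_sub_liftLeft hyu.ne']
  exact div_nonneg (mul_nonneg hy (by linarith)) hyu.le

theorem liftFrac_eq_liftRight (hy : 0 ≤ y) (hyu : 0 < 1 - y * u) (hu : 1 - c ≤ u) :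
    liftFrac y c u = liftRight y c u := by
  refine min_eq_right (sub_nonpos.mp ?_)
  rw [liftRight_sub_liftLeft hyu.ne']
  exact div_nonpos_of_nonpos_of_nonneg (mul_nonpos_of_nonneg_of_nonpos hy (by linarith)) hyu.le

theorem liftFrac_zero (hy : 0 ≤ y) (hc : c ≤ 1) : liftFrac y c 0 = c := by
  rw [liftFrac_eq_liftLeft hy (by simp) (by linarith), liftLeft]
  simp

theorem liftFrac_one (hy0 : 0 ≤ y) (hy1 : y < 1) (hc : 0 ≤ c) : liftFrac y c 1 = c + 1 := by
  have hy : 1 - y ≠ 0 := sub_ne_zero.mpr hy1.ne'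
  rw [liftFrac_eq_liftRight hy0 (by linarith) (by linarith), liftRight, mul_one]
  field_simp
  ring

theorem liftLeft_strictMonoOn (hy0 : 0 ≤ y) (hy1 : y < 1) (hc : 0 ≤ c) :
    StrictMonoOn (liftLeft y c) (Iic 1) := by
  intro s hs t ht hst
  have key : (c + (1 - y) * t) * (1 - y * s) - (c + (1 - y) * s) * (1 - y * t)
      = (t - s) * (1 - y + y * c) := by ring
  rw [liftLeft, liftLeft, div_lt_div_iff₀ (one_sub_mul_pos hy0 hy1 hs) (one_sub_mul_pos hy0 hy1 ht),
    ← sub_pos, key]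
  exact mul_pos (sub_pos.mpr hst) (by nlinarith)

theorem liftRight_strictMonoOn (hy0 : 0 ≤ y) (hy1 : y < 1) (hc : 0 ≤ c) :
    StrictMonoOn (liftRight y c) (Iic 1) := by
  intro s hs t ht hst
  have key : ((1 - y) * (1 - c) + (1 - s)) * (1 - y * t)
      - ((1 - y) * (1 - c) + (1 - t)) * (1 - y * s)
      = (t - s) * ((1 - y) * (1 - y * (1 - c))) := by ring
  rw [liftRight, liftRight, sub_lt_sub_iff_left,
    div_lt_div_iff₀ (one_sub_mul_pos hy0 hy1 ht) (one_sub_mul_pos hy0 hy1 hs), ← sub_pos, key]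
  exact mul_pos (sub_pos.mpr hst) (mul_pos (by linarith) (by nlinarith))

theorem liftFrac_strictMonoOn (hy0 : 0 ≤ y) (hy1 : y < 1) (hc : 0 ≤ c) :
    StrictMonoOn (liftFrac y c) (Iic 1) := fun _ hs _ ht hst =>
  min_lt_min (liftLeft_strictMonoOn hy0 hy1 hc hs ht hst)
    (liftRight_strictMonoOn hy0 hy1 hc hs ht hst)

theorem liftFrac_mem_Ico (hy0 : 0 ≤ y) (hy1 : y < 1) (hc : c ∈ Icc 0 1) (hu : u ∈ Ico 0 1) :
    liftFrac y c u ∈ Ico c (c + 1) := by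
  have hmono := liftFrac_strictMonoOn hy0 hy1 hc.1
  refine ⟨?_, ?_⟩
  · calc c = liftFrac y c 0 := (liftFrac_zero hy0 hc.2).symm
      _ ≤ liftFrac y c u := hmono.le_iff_le (by simp) (by simp [hu.2.le]) |>.mpr hu.1
  · calc liftFrac y c u < liftFrac y c 1 := hmono (by simp [hu.2.le]) (by simp) hu.2
      _ = c + 1 := liftFrac_one hy0 hy1 hc.1

theorem continuousOn_liftFrac (hy0 : 0 ≤ y) (hy1 : y < 1) :
    ContinuousOn (fun p : ℝ × ℝ => liftFrac y p.1 p.2) (univ ×ˢ Iic 1) := by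
  have hD : ∀ p ∈ (univ ×ˢ Iic 1 : Set (ℝ × ℝ)), 1 - y * p.2 ≠ 0 := fun p hp =>
    (one_sub_mul_pos hy0 hy1 hp.2).ne'
  unfold liftFrac liftLeft liftRight
  fun_prop (disch := exact hD)

end Branches

noncomputable def liftE (y c s : ℝ) : ℝ := ⌊s⌋ + liftFrac y c (Int.fract s)

section LiftE

variable {y c : ℝ}

theorem liftE_add_intCast (s : ℝ) (n : ℤ) : liftE y c (s + n) = liftE y c s + n := by
  rw [liftE, liftE, Int.floor_add_intCast, Int.fract_add_intCast]
  push_cast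
  ring

theorem liftE_intCast (hy0 : 0 ≤ y) (hc : c ≤ 1) (n : ℤ) : liftE y c n = n + c := by
  rw [liftE, Int.floor_intCast, Int.fract_intCast, liftFrac_zero hy0 hc]

theorem liftE_strictMono (hy0 : 0 ≤ y) (hy1 : y < 1) (hc : c ∈ Icc 0 1) :
    StrictMono (liftE y c) := by
  intro s t hst
  have hfract : ∀ r : ℝ, Int.fract r ∈ Ico 0 1 := fun r => ⟨Int.fract_nonneg r, Int.fract_lt_one r⟩
  rcases (Int.floor_mono hst.le).eq_or_lt with hfl | hfl
  · have : Int.fract s < Int.fract t := by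
      rw [Int.fract, Int.fract, hfl]
      linarith
    rw [liftE, liftE, hfl, add_lt_add_iff_left]
    exact liftFrac_strictMonoOn hy0 hy1 hc.1 (hfract s).2.le (hfract t).2.le this
  · have h1 : (⌊s⌋ : ℝ) + 1 ≤ ⌊t⌋ := by exact_mod_cast hfl
    have h2 := liftFrac_mem_Ico hy0 hy1 hc (hfract s)
    have h3 := liftFrac_mem_Ico hy0 hy1 hc (hfract t)
    rw [liftE, liftE]
    linarith [h2.2, h3.1]

theorem liftE_eq_add (s : ℝ) : liftE y c s = s + (liftFrac y c (Int.fract s) - Int.fract s) := by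
  rw [liftE]
  linarith [Int.floor_add_fract s]

theorem continuous_liftE (hy0 : 0 ≤ y) (hy1 : y < 1) :
    Continuous fun p : unitInterval × ℝ => liftE y p.1 p.2 := by
  -- subtracting `u` makes the fibre map agree at `u = 0` and `u = 1`
  have hperiodic : Continuous fun p : unitInterval × ℝ =>
      liftFrac y p.1 (Int.fract p.2) - Int.fract p.2 := by
    refine ContinuousOn.comp_fract' (f := fun (c : unitInterval) u => liftFrac y c u - u) ?_
      fun c => ?_
    · refine ContinuousOn.sub ?_ continuous_snd.continuousOn
      exact (continuousOn_liftFrac hy0 hy1).comp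
        (continuous_subtype_val.prodMap continuous_id).continuousOn
        fun p (hp : p ∈ univ ×ˢ Icc 0 1) => ⟨trivial, hp.2.2⟩
    · rw [liftFrac_zero hy0 c.2.2, liftFrac_one hy0 hy1 c.2.1]
      ring
  exact (continuous_snd.add hperiodic).congr fun p => (liftE_eq_add p.2).symm

end LiftE

section Conjugacy

variable {y c u : ℝ}

theorem hMob_phiInvMap (hc : c < 1) (hu : u < 1) :
    hMob y (1 - c)⁻¹ (phiInvMap u) = (1 - y * u) / ((1 - y) * (1 - c) + (1 - u)) := by
  have : 1 - c ≠ 0 := by linarith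
  have : 1 - u ≠ 0 := by linarith
  unfold hMob phiInvMap
  field_simp
  ring

theorem phiMap_hMob_phiInvMap (hy0 : 0 ≤ y) (hy1 : y < 1) (hc : c < 1) (hu : u < 1) :
    phiMap (hMob y (1 - c)⁻¹ (phiInvMap u)) = liftRight y c u - 1 := by
  have : 1 - y * u ≠ 0 := (one_sub_mul_pos hy0 hy1 hu.le).ne'
  have : (1 - y) * (1 - c) + (1 - u) ≠ 0 := by nlinarith
  rw [hMob_phiInvMap hc hu, phiMap, liftRight]
  field_simp
  ring

theorem phiMap_gMob_hMob_phiInvMap (hy0 : 0 ≤ y) (hy1 : y < 1) (hc0 : 0 ≤ c) (hc1 : c < 1)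
    (hu : u < 1 - c) :
    phiMap (gMob y (hMob y (1 - c)⁻¹ (phiInvMap u))) = liftLeft y c u := by
  have : 1 - y * u ≠ 0 := (one_sub_mul_pos hy0 hy1 (by linarith)).ne'
  have : 1 - c - u ≠ 0 := by linarith
  have : y - 1 ≠ 0 := by linarith
  have hden : (1 - y) * (1 - c) + (1 - u) ≠ 0 := by nlinarith
  have hsub : (1 - y * u) / ((1 - y) * (1 - c) + (1 - u)) - 1
      = (y - 1) * (1 - c - u) / ((1 - y) * (1 - c) + (1 - u)) := by
    field_simp
    ring
  rw [hMob_phiInvMap hc1 (by linarith), gMob, hsub, phiMap, liftLeft]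
  field_simp
  ring

theorem phiMap_affine_phiInvMap (hy0 : 0 ≤ y) (hy1 : y < 1) (hu : u < 1) :
    phiMap ((1 - y) * phiInvMap u + y) = liftLeft y 0 u := by
  have : 1 - y * u ≠ 0 := (one_sub_mul_pos hy0 hy1 hu.le).ne'
  have : 1 - u ≠ 0 := by linarith
  have hsum : (1 - y) * phiInvMap u + y = (1 - y * u) / (1 - u) := by
    rw [phiInvMap]
    field_simp
    ring
  rw [hsum, phiMap, liftLeft]
  field_simp
  ring

theorem phiInvMap_lt_iff (hc0 : 0 < c) (hc1 : c < 1) (hu : u < 1) :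
    phiInvMap u < (1 - c)⁻¹ / ((1 - c)⁻¹ - 1) ↔ u < 1 - c := by
  have hx : (1 - c)⁻¹ / ((1 - c)⁻¹ - 1) = c⁻¹ := by
    have : 1 - c ≠ 0 := by linarith
    field_simp
    rw [sub_sub_cancel, div_self hc0.ne']
  rw [hx, phiInvMap, one_div, inv_lt_inv₀ (by linarith) hc0]
  constructor <;> intro <;> linarith

theorem coe_liftFrac_eq_phiMap_EMap (hy0 : 0 ≤ y) (hy1 : y < 1) (hc : c ∈ Ico 0 1)
    (hu : u ∈ Ico 0 1) :
    ((liftFrac y c u : ℝ) : UnitAddCircle) = phiMap (EMap y (1 - c)⁻¹ (phiInvMap u)) := by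
  have hyu := one_sub_mul_pos hy0 hy1 hu.2.le
  rcases hc.1.eq_or_lt with rfl | hc0
  · rw [EMap, if_pos (by simp), liftFrac_eq_liftLeft hy0 hyu (by linarith [hu.2]),
      phiMap_affine_phiInvMap hy0 hy1 hu.2]
  have hx : (1 - c)⁻¹ ≠ 1 := by
    rw [Ne, inv_eq_one]
    linarith
  rw [EMap, if_neg hx]
  by_cases hlt : u < 1 - c
  · rw [if_pos ((phiInvMap_lt_iff hc0 hc.2 hu.2).mpr hlt), liftFrac_eq_liftLeft hy0 hyu hlt.le,
      phiMap_gMob_hMob_phiInvMap hy0 hy1 hc.1 hc.2 hlt]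
  · rw [if_neg (by rwa [phiInvMap_lt_iff hc0 hc.2 hu.2]),
      liftFrac_eq_liftRight hy0 hyu (not_lt.mp hlt), phiMap_hMob_phiInvMap hy0 hy1 hc.2 hu.2]
    simp [AddCircle.coe_period]

theorem coe_liftE_eq_EHat (hy0 : 0 ≤ y) (hy1 : y < 1) (hc : c ∈ Ico 0 1) (s : ℝ) :
    ((liftE y c s : ℝ) : UnitAddCircle) = EHat y (1 - c)⁻¹ s := by
  have hfract : ((AddCircle.equivIco 1 0 (s : UnitAddCircle) : ℝ)) = Int.fract s := by
    simp [AddCircle.coe_equivIco_mk_apply]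
  rw [EHat, hfract, ← coe_liftFrac_eq_phiMap_EMap hy0 hy1 hc
    ⟨Int.fract_nonneg s, Int.fract_lt_one s⟩, liftE]
  simp

end Conjugacy

noncomputable def circleLiftE {y : ℝ} (hy0 : 0 ≤ y) (hy1 : y < 1) (c : unitInterval) :
    CircleDeg1Lift where
  toFun := liftE y c
  monotone' := (liftE_strictMono hy0 hy1 c.2).monotone
  map_add_one' s := by exact_mod_cast liftE_add_intCast s 1

@[simp]
theorem coe_circleLiftE {y : ℝ} (hy0 : 0 ≤ y) (hy1 : y < 1) (c : unitInterval) :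
    ⇑(circleLiftE hy0 hy1 c) = liftE y c :=
  rfl

theorem exists_liftE_iterate_zero_eq {y : ℝ} (hy0 : 0 ≤ y) (hy1 : y < 1) {p q : ℕ}
    (hpq : p < q) :
    ∃ c : unitInterval, (c : ℝ) < 1 ∧ (liftE y c)^[q] 0 = p := by
  have hcont := continuous_iterate_apply_of_continuous_uncurry
    (F := fun c : unitInterval => liftE y c) (continuous_liftE hy0 hy1) q 0
  have h0 : (liftE y (0 : unitInterval))^[q] 0 = 0 :=
    Function.iterate_fixed (by simpa using liftE_intCast hy0 zero_le_one 0) q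
  have h1 : (liftE y (1 : unitInterval))^[q] 0 = q := by
    simpa using (circleLiftE hy0 hy1 1).iterate_eq_of_map_eq_add_int (x := 0) (m := 1)
      (by simpa using liftE_intCast hy0 le_rfl 0) q
  obtain ⟨c, hc⟩ := intermediate_value_univ (0 : unitInterval) 1 hcont
    (show (p : ℝ) ∈ Icc _ _ by rw [h0, h1]; exact ⟨p.cast_nonneg, by exact_mod_cast hpq.le⟩)
  refine ⟨c, c.2.2.lt_of_ne fun hc1 => hpq.ne ?_, hc⟩
  rw [show c = 1 from Subtype.ext hc1] at hc
  exact_mod_cast hc.symm.trans h1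

/-- For every pair of coprime integers `0 ≤ p < q`, `q ≥ 1`, there are `x ∈ [1,∞)` and a lift
`F` of `Ê_x` with `F^q(0) = p`; in particular the orbit of the marked point `0 mod 1` under
`Ê_x` is periodic of minimal period `q` and the rotation number of `Ê_x` is `p/q mod 1`. -/
theorem realization_of_rational_rotation_numbers (θ : ℝ) (hθ : 0 < θ)
    (y : ℝ) (hy : y = 1 - Real.exp (-θ))
    (p q : ℕ) (hq : 1 ≤ q) (hp : p < q) (hpq : Nat.Coprime p q) :
    ∃ x ∈ Ici (1:ℝ), ∃ F : ℝ → ℝ, IsLiftOf F (EHat y x) ∧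
      F^[q] 0 = (p : ℝ) ∧
      HasTransNum F ((p : ℝ) / (q : ℝ)) ∧
      ∀ k : ℕ, 0 < k → k < q → ∀ m : ℤ, F^[k] 0 ≠ (m : ℝ) := by
  have hy0 : 0 ≤ y := by rw [hy, sub_nonneg]; exact Real.exp_le_one_iff.mpr (by linarith)
  have hy1 : y < 1 := by rw [hy]; linarith [Real.exp_pos (-θ)]
  obtain ⟨c, hc1, hc⟩ := exists_liftE_iterate_zero_eq hy0 hy1 hp
  set f := circleLiftE hy0 hy1 c
  have hfq : f^[q] 0 = 0 + (p : ℤ) := by simpa [f] using hc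
  have hτ := f.translationNumber_of_map_pow_eq_add_int (by rwa [CircleDeg1Lift.coe_pow]) hq
  refine ⟨(1 - (c : ℝ))⁻¹, (one_le_inv₀ (sub_pos.mpr hc1)).mpr (sub_le_self 1 c.2.1), f,
    ⟨f.isCircleLift ?_ (liftE_strictMono hy0 hy1 c.2), coe_liftE_eq_EHat hy0 hy1 ⟨c.2.1, hc1⟩⟩,
    hc, by simpa [hτ] using f.hasTransNum, fun k hk hkq m => ?_⟩
  · exact (continuous_liftE hy0 hy1).comp (continuous_const.prodMk continuous_id)
  · simpa using
      f.iterate_ne_add_int_of_isCoprime hq (Nat.isCoprime_iff_coprime.mpr hpq) hfq hk hkq m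
end

section
/- Let x₁, x₂ ∈ (1,∞), and let p, q be coprime integers with q ≥ 1. Suppose that for i = 1, 2 there is a lift F_i : ℝ → ℝ of Ê_{x_i} (continuous, strictly increasing, with F_i(s+1) = F_i(s)+1 for all s, inducing Ê_{x_i} on ℝ/ℤ) satisfying F_i^q(0) = p — that is, the marked point 0 mod 1 has a periodic orbit of the same rotation number p/q (hence of the same cyclic order) under both Ê_{x₁} and Ê_{x₂}. Then x₁ = x₂. -/
open Set Filter

/-! Normalised by its value `φ(x) ∈ (0,1)` at `0`, the lift of `Ê_x` increases strictly with `x`,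
because both branches of `E_x` do. For a lift `F` of degree one and an integer `m`, the sign of
`F^q(0) - q m` is that of `F(0) - m`; so `F₁^q(0) = F₂^q(0)` forces `⌊F₁(0)⌋ = ⌊F₂(0)⌋`. If
`x₁ < x₂`, the two lifts then differ from the normalised ones by the same integer, hence `F₁ < F₂`
pointwise and `F₁^q(0) < F₂^q(0)`, which is absurd. -/

theorem Monotone.iterate_pos_lt_of_lt {α : Type*} [Preorder α] {f g : α → α} (hf : Monotone f)
    (hg : StrictMono g) (h : ∀ x, f x < g x) {n : ℕ} (hn : 0 < n) (x : α) :
    f^[n] x < g^[n] x := by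
  obtain ⟨m, rfl⟩ := Nat.exists_eq_succ_of_ne_zero hn.ne'
  calc f^[m + 1] x = f^[m] (f x) := Function.iterate_succ_apply f m x
    _ ≤ g^[m] (f x) := hf.iterate_le_of_le (fun x => (h x).le) m (f x)
    _ < g^[m] (g x) := hg.iterate m (h x)
    _ = g^[m + 1] x := (Function.iterate_succ_apply g m x).symm

namespace CircleDeg1Lift

variable (f g : CircleDeg1Lift)

theorem floor_map_zero_eq_of_iterate_eq {n : ℕ} (hn : 0 < n) (h : f^[n] 0 = g^[n] 0) :
    ⌊f 0⌋ = ⌊g 0⌋ :=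
  eq_of_forall_le_iff fun m => by
    rw [Int.le_floor, Int.le_floor, ← zero_add (m : ℝ), ← f.le_iterate_pos_iff hn,
      ← g.le_iterate_pos_iff hn, h]

theorem lt_of_forall_mem_Ico_lt (h : ∀ s ∈ Ico (0 : ℝ) 1, f s < g s) (s : ℝ) : f s < g s := by
  have := h (Int.fract s) ⟨Int.fract_nonneg s, Int.fract_lt_one s⟩
  linarith [f.map_fract_sub_fract_eq s, g.map_fract_sub_fract_eq s]

end CircleDeg1Lift

def IsCircleLift.toCircleDeg1Lift {F : ℝ → ℝ} (hF : IsCircleLift F) : CircleDeg1Lift :=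
  ⟨⟨F, hF.2.1.monotone⟩, hF.2.2.2⟩

section Chart

variable {a b s t : ℝ}

theorem phiMap_lt_phiMap (ha : 0 < a) (h : a < b) : phiMap a < phiMap b := by
  unfold phiMap
  linarith [one_div_lt_one_div_of_lt ha h]

theorem phiMap_le_phiMap (ha : 0 < a) (h : a ≤ b) : phiMap a ≤ phiMap b := by
  unfold phiMap
  linarith [one_div_le_one_div_of_le ha h]

theorem phiMap_lt_one (ht : 0 < t) : phiMap t < 1 := by
  unfold phiMap
  linarith [one_div_pos.2 ht]

theorem phiMap_mem_Ico (ht : 1 ≤ t) : phiMap t ∈ Ico 0 1 :=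
  ⟨by simpa [phiMap] using phiMap_le_phiMap one_pos ht, phiMap_lt_one (by linarith)⟩

theorem phiInvMap_zero : phiInvMap 0 = 1 := by
  norm_num [phiInvMap]

theorem one_le_phiInvMap (hs : s ∈ Ico (0 : ℝ) 1) : 1 ≤ phiInvMap s := by
  unfold phiInvMap
  rw [le_div_iff₀ (by linarith [hs.2])]
  linarith [hs.1]

end Chart

section IntervalExchange

variable {y x x₁ x₂ t : ℝ}

theorem one_lt_div_sub_one (hx : 1 < x) : 1 < x / (x - 1) := by
  rw [lt_div_iff₀ (by linarith)]
  linarith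

theorem div_sub_one_lt_div_sub_one (hx₁ : 1 < x₁) (h : x₁ < x₂) :
    x₂ / (x₂ - 1) < x₁ / (x₁ - 1) := by
  rw [div_lt_div_iff₀ (by linarith) (by linarith)]
  linarith

theorem EMap_of_lt (hy : y < 1) (hx : 1 < x) (ht : 1 ≤ t) (htx : t < x / (x - 1)) :
    EMap y x t = x * ((1 - y) * t + y) / (x - (x - 1) * t) := by
  have hD : 0 < x - (x - 1) * t := by
    have := (lt_div_iff₀ (by linarith : (0 : ℝ) < x - 1)).1 htx
    linarith
  have hM : 0 < (1 - y) * t + x := by nlinarith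
  have hh : hMob y x t - 1 = -((1 - y) * (x - (x - 1) * t)) / ((1 - y) * t + x) := by
    rw [hMob]
    field_simp
    ring
  have h1y : (1 : ℝ) - y ≠ 0 := by linarith
  rw [EMap, if_neg hx.ne', if_pos htx, gMob, hh, hMob]
  field_simp
  ring

theorem EMap_of_le (hx : 1 < x) (htx : x / (x - 1) ≤ t) :
    EMap y x t = x * ((1 - y) * t + y) / ((1 - y) * t + x) := by
  rw [EMap, if_neg hx.ne', if_neg (not_lt.2 htx), hMob]

theorem EMap_one (hy : y < 1) (hx : 1 < x) : EMap y x 1 = x := by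
  rw [EMap_of_lt hy hx le_rfl (one_lt_div_sub_one hx)]
  field_simp
  ring

theorem le_EMap_of_lt (hy : y < 1) (hx : 1 < x) (ht : 1 ≤ t) (htx : t < x / (x - 1)) :
    x ≤ EMap y x t := by
  have hD : 0 < x - (x - 1) * t := by
    have := (lt_div_iff₀ (by linarith : (0 : ℝ) < x - 1)).1 htx
    linarith
  rw [EMap_of_lt hy hx ht htx, le_div_iff₀ hD]
  nlinarith [mul_nonneg (by linarith : (0 : ℝ) ≤ x) (mul_nonneg (by linarith : (0 : ℝ) ≤ t - 1)
    (by linarith : (0 : ℝ) ≤ x - y))]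

theorem EMap_mem_Ico_of_le (hy : y < 1) (hx : 1 < x) (htx : x / (x - 1) ≤ t) :
    EMap y x t ∈ Ico 1 x := by
  have hxt : x ≤ (x - 1) * t := by
    have := (div_le_iff₀ (by linarith : (0 : ℝ) < x - 1)).1 htx
    linarith
  have ht : 1 < t := (one_lt_div_sub_one hx).trans_le htx
  have hM : 0 < (1 - y) * t + x := by nlinarith
  rw [EMap_of_le hx htx, mem_Ico, le_div_iff₀ hM, div_lt_iff₀ hM]
  constructor
  · nlinarith [mul_nonneg (by linarith : (0 : ℝ) ≤ 1 - y) (by linarith : (0 : ℝ) ≤ (x - 1) * t - x)]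
  · nlinarith [mul_pos (by linarith : (0 : ℝ) < x) (by linarith : (0 : ℝ) < x - y)]

theorem EMap_lt_EMap_of_lt (hy : y < 1) (hx₁ : 1 < x₁) (h : x₁ < x₂) (ht : 1 ≤ t)
    (ht₂ : t < x₂ / (x₂ - 1)) : EMap y x₁ t < EMap y x₂ t := by
  have ht₁ : t < x₁ / (x₁ - 1) := ht₂.trans (div_sub_one_lt_div_sub_one hx₁ h)
  have hD₁ : 0 < x₁ - (x₁ - 1) * t := by
    have := (lt_div_iff₀ (by linarith : (0 : ℝ) < x₁ - 1)).1 ht₁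
    linarith
  have hD₂ : 0 < x₂ - (x₂ - 1) * t := by
    have := (lt_div_iff₀ (by linarith : (0 : ℝ) < x₂ - 1)).1 ht₂
    linarith
  have hN : 0 < (1 - y) * t + y := by nlinarith
  rw [EMap_of_lt hy hx₁ ht ht₁, EMap_of_lt hy (hx₁.trans h) ht ht₂, div_lt_div_iff₀ hD₁ hD₂]
  nlinarith [mul_pos (mul_pos hN (by linarith : (0 : ℝ) < t)) (by linarith : (0 : ℝ) < x₂ - x₁)]

theorem EMap_lt_EMap_of_le (hy : y < 1) (hx₁ : 1 < x₁) (h : x₁ < x₂)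
    (ht₁ : x₁ / (x₁ - 1) ≤ t) : EMap y x₁ t < EMap y x₂ t := by
  have ht₂ : x₂ / (x₂ - 1) ≤ t := (div_sub_one_lt_div_sub_one hx₁ h).le.trans ht₁
  have ht : 1 < t := (one_lt_div_sub_one hx₁).trans_le ht₁
  have hM₁ : 0 < (1 - y) * t + x₁ := by nlinarith
  have hM₂ : 0 < (1 - y) * t + x₂ := by nlinarith
  have hN : 0 < (1 - y) * t + y := by nlinarith
  rw [EMap_of_le hx₁ ht₁, EMap_of_le (hx₁.trans h) ht₂, div_lt_div_iff₀ hM₁ hM₂]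
  nlinarith [mul_pos (mul_pos (mul_pos hN (by linarith : (0 : ℝ) < 1 - y))
    (by linarith : (0 : ℝ) < t)) (by linarith : (0 : ℝ) < x₂ - x₁)]

end IntervalExchange

section Lift

variable {y x x₁ x₂ s : ℝ} {F F₁ F₂ : ℝ → ℝ}

theorem EHat_coe (hs : s ∈ Ico (0 : ℝ) 1) :
    EHat y x s = ((phiMap (EMap y x (phiInvMap s)) : ℝ) : UnitAddCircle) := by
  rw [EHat, AddCircle.equivIco_coe_of_mem (by rwa [zero_add])]

/-- The lift of `Ê_x` on `[0, 1)` with value `φ(x)` at `0`: on `[x', ∞)` the map `E_x` lands in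
`[1, x)`, below `E_x(1) = x`, so that branch is raised by one. -/
noncomputable def EHatLift (y x s : ℝ) : ℝ :=
  if phiInvMap s < x / (x - 1) then phiMap (EMap y x (phiInvMap s))
  else phiMap (EMap y x (phiInvMap s)) + 1

theorem coe_EHatLift (hs : s ∈ Ico (0 : ℝ) 1) :
    (EHatLift y x s : UnitAddCircle) = EHat y x s := by
  rw [EHat_coe hs, EHatLift]
  split_ifs
  · rfl
  · exact AddCircle.coe_add_period 1 _

theorem EHatLift_mem_Ico (hy : y < 1) (hx : 1 < x) (hs : s ∈ Ico (0 : ℝ) 1) :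
    EHatLift y x s ∈ Ico (phiMap x) (phiMap x + 1) := by
  have ht := one_le_phiInvMap hs
  rw [EHatLift]
  split_ifs with htx
  · have hxE := le_EMap_of_lt hy hx ht htx
    exact ⟨phiMap_le_phiMap (by linarith) hxE,
      by linarith [phiMap_lt_one (by linarith : 0 < EMap y x (phiInvMap s)),
        (phiMap_mem_Ico hx.le).1]⟩
  · have hE := EMap_mem_Ico_of_le hy hx (not_lt.1 htx)
    exact ⟨by linarith [(phiMap_mem_Ico hx.le).2, (phiMap_mem_Ico hE.1).1],
      by linarith [phiMap_lt_phiMap (by linarith [hE.1]) hE.2]⟩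

theorem EHatLift_lt_EHatLift (hy : y < 1) (hx₁ : 1 < x₁) (h : x₁ < x₂)
    (hs : s ∈ Ico (0 : ℝ) 1) : EHatLift y x₁ s < EHatLift y x₂ s := by
  have ht := one_le_phiInvMap hs
  have hx₂ := hx₁.trans h
  unfold EHatLift
  rcases lt_or_ge (phiInvMap s) (x₂ / (x₂ - 1)) with ht₂ | ht₂
  · have ht₁ := ht₂.trans (div_sub_one_lt_div_sub_one hx₁ h)
    rw [if_pos ht₁, if_pos ht₂]
    exact phiMap_lt_phiMap (by linarith [le_EMap_of_lt hy hx₁ ht ht₁])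
      (EMap_lt_EMap_of_lt hy hx₁ h ht ht₂)
  rcases lt_or_ge (phiInvMap s) (x₁ / (x₁ - 1)) with ht₁ | ht₁
  · rw [if_pos ht₁, if_neg (not_lt.2 ht₂)]
    have hE₁ := le_EMap_of_lt hy hx₁ ht ht₁
    linarith [phiMap_lt_one (by linarith : 0 < EMap y x₁ (phiInvMap s)),
      (phiMap_mem_Ico (EMap_mem_Ico_of_le hy hx₂ ht₂).1).1]
  · rw [if_neg (not_lt.2 ht₁), if_neg (not_lt.2 ht₂)]
    linarith [phiMap_lt_phiMap (by linarith [(EMap_mem_Ico_of_le hy hx₁ ht₁).1])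
      (EMap_lt_EMap_of_le hy hx₁ h ht₁)]

theorem IsLiftOf.fract_map_zero (hy : y < 1) (hx : 1 < x) (hF : IsLiftOf F (EHat y x)) :
    Int.fract (F 0) = phiMap x := by
  have hfract : Int.fract (F 0) ∈ Ico (0 : ℝ) (0 + 1) := by
    rw [zero_add]; exact ⟨Int.fract_nonneg _, Int.fract_lt_one _⟩
  have hphi : phiMap x ∈ Ico (0 : ℝ) (0 + 1) := by
    rw [zero_add]; exact phiMap_mem_Ico hx.le
  refine (AddCircle.coe_eq_coe_iff_of_mem_Ico hfract hphi).1 ?_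
  rw [AddCircle.coe_fract, hF.2, EHat_coe (by simp), phiInvMap_zero, EMap_one hy hx]

theorem IsLiftOf.eq_floor_add_EHatLift (hy : y < 1) (hx : 1 < x) (hF : IsLiftOf F (EHat y x))
    (hs : s ∈ Ico (0 : ℝ) 1) : F s = ⌊F 0⌋ + EHatLift y x s := by
  have h0 : F 0 = ⌊F 0⌋ + phiMap x := by rw [← hF.fract_map_zero hy hx, Int.floor_add_fract]
  have hmem : F s - ⌊F 0⌋ ∈ Ico (phiMap x) (phiMap x + 1) := by
    have hlo : F 0 ≤ F s := hF.1.2.1.monotone hs.1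
    have hhi : F s < F 0 + 1 := by
      have h1 := hF.1.2.2.2 0
      rw [zero_add] at h1
      exact h1 ▸ hF.1.2.1 hs.2
    constructor <;> linarith
  have hcoe : ((F s - ⌊F 0⌋ : ℝ) : UnitAddCircle) = EHatLift y x s := by
    rw [coe_EHatLift hs, ← hF.2]
    simp
  linarith [(AddCircle.coe_eq_coe_iff_of_mem_Ico hmem (EHatLift_mem_Ico hy hx hs)).1 hcoe]

theorem IsLiftOf.lt_of_floor_eq (hy : y < 1) (hx₁ : 1 < x₁) (h : x₁ < x₂)
    (h₁ : IsLiftOf F₁ (EHat y x₁)) (h₂ : IsLiftOf F₂ (EHat y x₂)) (hfloor : ⌊F₁ 0⌋ = ⌊F₂ 0⌋)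
    (s : ℝ) : F₁ s < F₂ s :=
  h₁.1.toCircleDeg1Lift.lt_of_forall_mem_Ico_lt h₂.1.toCircleDeg1Lift (fun t ht => by
    change F₁ t < F₂ t
    rw [h₁.eq_floor_add_EHatLift hy hx₁ ht, h₂.eq_floor_add_EHatLift hy (hx₁.trans h) ht, hfloor]
    linarith [EHatLift_lt_EHatLift hy hx₁ h ht]) s

theorem IsLiftOf.not_lt_of_iterate_eq (hy : y < 1) (hx₁ : 1 < x₁)
    (h₁ : IsLiftOf F₁ (EHat y x₁)) (h₂ : IsLiftOf F₂ (EHat y x₂)) {q : ℕ} (hq : 0 < q)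
    (hF : F₁^[q] 0 = F₂^[q] 0) : ¬x₁ < x₂ := fun h =>
  have hfloor :=
    h₁.1.toCircleDeg1Lift.floor_map_zero_eq_of_iterate_eq h₂.1.toCircleDeg1Lift hq hF
  (h₁.1.2.1.monotone.iterate_pos_lt_of_lt h₂.1.2.1 (h₁.lt_of_floor_eq hy hx₁ h h₂ hfloor) hq 0).ne hF

end Lift

theorem rigidity_of_periodic_marked_orbit_general (θ : ℝ)
    (y : ℝ) (hy : y = 1 - Real.exp (-θ))
    (x₁ x₂ : ℝ) (hx₁ : x₁ ∈ Ioi (1:ℝ)) (hx₂ : x₂ ∈ Ioi (1:ℝ))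
    (p : ℤ) (q : ℕ) (hq : 1 ≤ q)
    (F₁ F₂ : ℝ → ℝ)
    (h₁ : IsLiftOf F₁ (EHat y x₁)) (h₂ : IsLiftOf F₂ (EHat y x₂))
    (hF₁ : F₁^[q] 0 = (p : ℝ)) (hF₂ : F₂^[q] 0 = (p : ℝ)) :
    x₁ = x₂ := by
  have hy1 : y < 1 := hy ▸ sub_lt_self 1 (Real.exp_pos _)
  have hF : F₁^[q] 0 = F₂^[q] 0 := hF₁.trans hF₂.symm
  exact le_antisymm (not_lt.1 (h₂.not_lt_of_iterate_eq hy1 hx₂ h₁ hq hF.symm))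
    (not_lt.1 (h₁.not_lt_of_iterate_eq hy1 hx₁ h₂ hq hF))

/-- Rigidity: if for two parameters `x₁, x₂ ∈ (1,∞)` the marked point `0 mod 1` has under
`Ê_{x₁}` and `Ê_{x₂}` a periodic orbit of the same rotation number `p/q` (hence the same
cyclic order), witnessed by lifts `F₁, F₂` with `Fᵢ^q(0) = p`, then `x₁ = x₂`. -/
theorem rigidity_of_periodic_marked_orbit (θ : ℝ) (hθ : 0 < θ)
    (y : ℝ) (hy : y = 1 - Real.exp (-θ))
    (x₁ x₂ : ℝ) (hx₁ : x₁ ∈ Ioi (1:ℝ)) (hx₂ : x₂ ∈ Ioi (1:ℝ))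
    (p : ℤ) (q : ℕ) (hq : 1 ≤ q) (hpq : Int.gcd p (q : ℤ) = 1)
    (F₁ F₂ : ℝ → ℝ)
    (h₁ : IsLiftOf F₁ (EHat y x₁)) (h₂ : IsLiftOf F₂ (EHat y x₂))
    (hF₁ : F₁^[q] 0 = (p : ℝ)) (hF₂ : F₂^[q] 0 = (p : ℝ)) :
    x₁ = x₂ :=
  rigidity_of_periodic_marked_orbit_general θ y hy x₁ x₂ hx₁ hx₂ p q hq F₁ F₂ h₁ h₂ hF₁ hF₂
end

section
/- Let λ > 0 and u ∈ ℝ, let g : ℝ → ℝ be the orientation-preserving affine map g(t) = λt + u, and let I ⊆ ℝ be a nonempty open interval with g(I) = I such that g has no fixed point in I. Then exactly one of the following holds: (i) λ = 1, u ≠ 0 and I = ℝ; or (ii) λ ≠ 1 and I is an open half-line, I = (c, ∞) or I = (−∞, c), whose finite endpoint c = u/(1−λ) is the unique fixed point of g. In particular, I is never a bounded interval. -/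
/-!
Both endpoints of an interval `I` with `g '' I = I` are fixed points of `g`, because a continuous
increasing map commutes with `sSup` and `sInf`. A translation by `u ≠ 0` has no fixed point, so
`I` has no finite endpoint and is all of `ℝ`. A map `t ↦ λt + u` with `λ ≠ 1` has the single
fixed point `c = u / (1 - λ)`, which is not in `I`; so `I` lies on one side of `c`, its endpoint on
that side is `c`, and it has no endpoint on the other side, since that would also be `c`.
-/

open Set Function

section FixedEndpoints

variable {α : Type*} [ConditionallyCompleteLinearOrder α] [TopologicalSpace α] [OrderTopology α]
  {f : α → α} {s : Set α}

theorem Monotone.isFixedPt_csSup_of_image_eq (hf : Monotone f) (hfc : ContinuousAt f (sSup s))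
    (hs : s.Nonempty) (hbdd : BddAbove s) (himg : f '' s = s) : IsFixedPt f (sSup s) :=
  (hf.map_csSup_of_continuousAt hfc hs hbdd).trans (by rw [himg])

theorem Monotone.isFixedPt_csInf_of_image_eq (hf : Monotone f) (hfc : ContinuousAt f (sInf s))
    (hs : s.Nonempty) (hbdd : BddBelow s) (himg : f '' s = s) : IsFixedPt f (sInf s) :=
  (hf.map_csInf_of_continuousAt hfc hs hbdd).trans (by rw [himg])

theorem IsPreconnected.eq_univ_of_image_eq (hs : IsPreconnected s) (hne : s.Nonempty)
    (hf : Monotone f) (hfc : Continuous f) (himg : f '' s = s) (hfix : ∀ t, ¬IsFixedPt f t) :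
    s = univ :=
  hs.eq_univ_of_unbounded
    (fun hbdd => hfix _ (hf.isFixedPt_csInf_of_image_eq hfc.continuousAt hne hbdd himg))
    (fun hbdd => hfix _ (hf.isFixedPt_csSup_of_image_eq hfc.continuousAt hne hbdd himg))

theorem IsPreconnected.eq_Ioi_of_image_eq (hs : IsPreconnected s) (hf : Monotone f)
    (hfc : Continuous f) (himg : f '' s = s) {c x : α} (hfix : ∀ t, IsFixedPt f t → t = c)
    (hcs : c ∉ s) (hxs : x ∈ s) (hcx : c < x) : s = Ioi c := by
  have hne : s.Nonempty := ⟨x, hxs⟩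
  have hsub : s ⊆ Ioi c := fun y hys =>
    lt_of_not_ge fun hyc => hcs (hs.ordConnected.out hys hxs ⟨hyc, hcx.le⟩)
  have hbdd : BddBelow s := ⟨c, fun y hy => (hsub hy).le⟩
  have hinf : sInf s = c := hfix _ (hf.isFixedPt_csInf_of_image_eq hfc.continuousAt hne hbdd himg)
  have hunbdd : ¬BddAbove s := fun hbdd' =>
    have hsup : sSup s = c :=
      hfix _ (hf.isFixedPt_csSup_of_image_eq hfc.continuousAt hne hbdd' himg)
    (le_csSup hbdd' hxs).not_gt (hsup ▸ hcx)
  exact hsub.antisymm (hinf ▸ hs.Ioi_csInf_subset hbdd hunbdd)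

theorem IsPreconnected.eq_Iio_of_image_eq (hs : IsPreconnected s) (hf : Monotone f)
    (hfc : Continuous f) (himg : f '' s = s) {c x : α} (hfix : ∀ t, IsFixedPt f t → t = c)
    (hcs : c ∉ s) (hxs : x ∈ s) (hxc : x < c) : s = Iio c :=
  IsPreconnected.eq_Ioi_of_image_eq (α := αᵒᵈ) hs hf.dual hfc himg hfix hcs hxs hxc

end FixedEndpoints

theorem mul_add_eq_self_iff {lam u : ℝ} (hlam : lam ≠ 1) (t : ℝ) :
    lam * t + u = t ↔ t = u / (1 - lam) := by
  rw [eq_div_iff (sub_ne_zero.mpr hlam.symm)]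
  constructor <;> intro h <;> linarith

theorem affine_invariant_interval_dichotomy_general
    (lam u : ℝ) (hlam : 0 < lam) (I : Set ℝ)
    (hne : I.Nonempty) (hconn : I.OrdConnected)
    (himg : (fun t => lam * t + u) '' I = I)
    (hfix : ∀ t ∈ I, lam * t + u ≠ t) :
    ((lam = 1 ∧ u ≠ 0 ∧ I = univ) ∨
      (lam ≠ 1 ∧ (I = Ioi (u / (1 - lam)) ∨ I = Iio (u / (1 - lam))) ∧
        ∀ t : ℝ, lam * t + u = t ↔ t = u / (1 - lam))) ∧
    ¬ (BddAbove I ∧ BddBelow I) := by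
  obtain ⟨x, hx⟩ := hne
  have hpre : IsPreconnected I := hconn.isPreconnected
  have hmono : Monotone fun t => lam * t + u := (monotone_id.const_mul hlam.le).add_const u
  have hcont : Continuous fun t => lam * t + u := by fun_prop
  rcases eq_or_ne lam 1 with rfl | hlam1
  · have hu : u ≠ 0 := fun hu => hfix x hx (by simp [hu])
    have hI : I = univ :=
      hpre.eq_univ_of_image_eq ⟨x, hx⟩ hmono hcont himg fun t ht => hu (by simpa [IsFixedPt] using ht)
    exact ⟨Or.inl ⟨rfl, hu, hI⟩, fun h => not_bddAbove_univ (hI ▸ h.1)⟩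
  · set c := u / (1 - lam)
    have hfixc : ∀ t, IsFixedPt (fun t => lam * t + u) t → t = c :=
      fun t => (mul_add_eq_self_iff hlam1 t).mp
    have hcI : c ∉ I := fun hc => hfix c hc ((mul_add_eq_self_iff hlam1 c).mpr rfl)
    rcases (ne_of_mem_of_not_mem hx hcI).lt_or_gt with hxc | hcx
    · have hI := hpre.eq_Iio_of_image_eq hmono hcont himg hfixc hcI hx hxc
      exact ⟨Or.inr ⟨hlam1, Or.inr hI, mul_add_eq_self_iff hlam1⟩,
        fun h => not_bddBelow_Iio c (hI ▸ h.2)⟩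
    · have hI := hpre.eq_Ioi_of_image_eq hmono hcont himg hfixc hcI hx hcx
      exact ⟨Or.inr ⟨hlam1, Or.inl hI, mul_add_eq_self_iff hlam1⟩,
        fun h => not_bddAbove_Ioi c (hI ▸ h.1)⟩

/-- Classification of affine circles: if `g(t) = λt + u` (with `λ > 0`) is an
orientation-preserving affine map and `I ⊆ ℝ` is a nonempty open interval (an open
order-connected set) with `g(I) = I` and no fixed point of `g` in `I`, then exactly one of
the following holds: (i) `λ = 1`, `u ≠ 0` and `I = ℝ`; or (ii) `λ ≠ 1` and `I` is an open
half-line `(c, ∞)` or `(−∞, c)` whose finite endpoint `c = u/(1−λ)` is the unique fixed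
point of `g`.  In particular `I` is never a bounded interval. -/
theorem affine_invariant_interval_dichotomy
    (lam u : ℝ) (hlam : 0 < lam) (I : Set ℝ)
    (hne : I.Nonempty) (hopen : IsOpen I) (hconn : I.OrdConnected)
    (himg : (fun t => lam * t + u) '' I = I)
    (hfix : ∀ t ∈ I, lam * t + u ≠ t) :
    ((lam = 1 ∧ u ≠ 0 ∧ I = univ) ∨
      (lam ≠ 1 ∧ (I = Ioi (u / (1 - lam)) ∨ I = Iio (u / (1 - lam))) ∧
        ∀ t : ℝ, lam * t + u = t ↔ t = u / (1 - lam))) ∧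
    ¬ (BddAbove I ∧ BddBelow I) :=
  affine_invariant_interval_dichotomy_general lam u hlam I hne hconn himg hfix
end
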